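/- Let G be a compact topological group acting continuously on ℝ^∞ by linear isometries. Then ℝ^∞ is the orthogonal direct sum of countably many finite-dimensional G-invariant subspaces; more precisely, there exist pairwise orthogonal finite-dimensional G-invariant subspaces W₁, W₂, … such that ℝ^n ⊆ W₁ ⊕ ⋯ ⊕ W_n for all n, and the W_n together span ℝ^∞. -/

import Mathlib

open scoped RealInnerProductSpace
noncomputable section

/-- `ℝ^∞`: the space of eventually-zero sequences of real numbers. -/
abbrev Rinf : Type := ℕ →₀ ℝ

/-- The inclusion `ℝ^n → ℝ^∞`. -/
def inclR (n : ℕ) : EuclideanSpace ℝ (Fin n) →ₗ[ℝ] Rinf where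
  toFun x := Finsupp.onFinset (Finset.range n)
    (fun m => if h : m < n then x ⟨m, h⟩ else 0)
    (fun m hm => by
      rw [Finset.mem_range]
      by_contra h
      simp [h] at hm)
  map_add' x y := Finsupp.ext fun m => by
    by_cases h : m < n <;> simp [Finsupp.onFinset_apply, h]
  map_smul' c x := Finsupp.ext fun m => by
    by_cases h : m < n <;> simp [Finsupp.onFinset_apply, h]

/-- The weak (colimit) topology on `ℝ^∞` with respect to the subspaces `ℝ^n`. -/
instance : TopologicalSpace Rinf :=
  ⨆ n, TopologicalSpace.coinduced (inclR n) inferInstance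

/-- The inner product on `ℝ^∞`. -/
def rinner (x y : Rinf) : ℝ := ∑' n, x n * y n

/-- A self-map of `ℝ^∞` is a linear isometric embedding if it is additive,
homogeneous and preserves the inner product. -/
def LinIso (f : Rinf → Rinf) : Prop :=
  (∀ a b, f (a + b) = f a + f b) ∧ (∀ (c : ℝ) (a : Rinf), f (c • a) = c • f a) ∧
    ∀ a b, rinner (f a) (f b) = rinner a b

/-- The monoid `L = L(ℝ^∞, ℝ^∞)` of (continuous) linear isometric self-embeddings of `ℝ^∞`,
topologized as a subspace of the compact-open mapping space. -/
abbrev LMon : Type := {f : C(Rinf, Rinf) // LinIso f}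


lemma inclR_apply (n : ℕ) (x : EuclideanSpace ℝ (Fin n)) (m : ℕ) :
    inclR n x m = if h : m < n then x ⟨m, h⟩ else 0 := rfl

lemma mem_range_inclR_iff {n : ℕ} {x : Rinf} :
    x ∈ Set.range (inclR n) ↔ ∀ m, n ≤ m → x m = 0 := by
  constructor
  · rintro ⟨y, rfl⟩ m hm
    simp [inclR_apply, Nat.not_lt.2 hm]
  · intro h
    refine ⟨WithLp.toLp 2 (fun i : Fin n => x i), Finsupp.ext fun m => ?_⟩
    by_cases hm : m < n
    · simp [inclR_apply, hm]
    · simp [inclR_apply, hm, (h m (Nat.not_lt.1 hm)).symm]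

lemma inclR_injective (n : ℕ) : Function.Injective (inclR n) := by
  intro a b hab
  ext i
  have := congrArg (fun z : Rinf => z i) hab
  simpa [inclR_apply, i.2] using this

lemma range_inclR_mono {n n' : ℕ} (h : n ≤ n') :
    Set.range (inclR n) ⊆ Set.range (inclR n') := by
  intro x hx
  rw [mem_range_inclR_iff] at hx ⊢
  exact fun m hm => hx m (h.trans hm)

lemma exists_mem_range_inclR (x : Rinf) : ∃ n, x ∈ Set.range (inclR n) := by
  refine ⟨(x.support.sup id) + 1, mem_range_inclR_iff.2 fun m hm => ?_⟩
  by_contra h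
  have hmem : m ∈ x.support := Finsupp.mem_support_iff.2 h
  have : m ≤ x.support.sup id := Finset.le_sup (f := id) hmem
  omega

lemma rinner_eq_sum (x y : Rinf) {s : Finset ℕ} (h : x.support ⊆ s) :
    rinner x y = ∑ n ∈ s, x n * y n := by
  refine tsum_eq_sum fun b hb => ?_
  have : x b = 0 := by
    by_contra hxb
    exact hb (h (Finsupp.mem_support_iff.2 hxb))
  rw [this, zero_mul]

lemma rinner_comm (x y : Rinf) : rinner x y = rinner y x := by
  rw [rinner_eq_sum x y (Finset.subset_union_left (s₂ := y.support)),
    rinner_eq_sum y x (Finset.subset_union_right (s₁ := x.support))]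
  exact Finset.sum_congr rfl fun n _ => mul_comm _ _

lemma rinner_add_left (a b y : Rinf) : rinner (a + b) y = rinner a y + rinner b y := by
  have hs : (a + b).support ⊆ a.support ∪ b.support := Finsupp.support_add
  rw [rinner_eq_sum (a + b) y hs,
    rinner_eq_sum a y (Finset.subset_union_left (s₂ := b.support)),
    rinner_eq_sum b y (Finset.subset_union_right (s₁ := a.support)),
    ← Finset.sum_add_distrib]
  exact Finset.sum_congr rfl fun n _ => by simp [add_mul]

lemma rinner_smul_left (c : ℝ) (x y : Rinf) : rinner (c • x) y = c • rinner x y := by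
  have hs : (c • x).support ⊆ x.support := Finsupp.support_smul
  rw [rinner_eq_sum (c • x) y hs, rinner_eq_sum x y (Finset.Subset.refl _),
    smul_eq_mul, Finset.mul_sum]
  exact Finset.sum_congr rfl fun n _ => by simp [mul_assoc]

lemma rinner_self_eq_zero {x : Rinf} (h : rinner x x = 0) : x = 0 := by
  rw [rinner_eq_sum x x (Finset.Subset.refl _)] at h
  have := (Finset.sum_eq_zero_iff_of_nonneg (fun n _ => mul_self_nonneg (x n))).1 h
  ext n
  by_cases hn : n ∈ x.support
  · exact mul_self_eq_zero.1 (this n hn)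
  · simpa using Finsupp.notMem_support_iff.1 hn

/-- `rinner` as a bilinear form. -/
def Bf : LinearMap.BilinForm ℝ Rinf :=
  LinearMap.mk₂ ℝ rinner rinner_add_left rinner_smul_left
    (fun x a b => by rw [rinner_comm, rinner_add_left, rinner_comm a, rinner_comm b])
    (fun c x y => by rw [rinner_comm, rinner_smul_left, rinner_comm, smul_eq_mul])

@[simp] lemma Bf_apply (x y : Rinf) : Bf x y = rinner x y := rfl

lemma Bf_isRefl : Bf.IsRefl := fun x y h => by
  simpa [rinner_comm y x] using h

/-- A set whose intersection with each finite stage is finite is closed. -/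
lemma isClosed_of_finite_inter {S : Set Rinf}
    (h : ∀ n, (S ∩ Set.range (inclR n)).Finite) : IsClosed S := by
  have : @IsClosed _ (⨆ n, TopologicalSpace.coinduced (inclR n) inferInstance) S := by
    rw [isClosed_iSup_iff]
    intro n
    rw [isClosed_coinduced]
    have heq : (inclR n) ⁻¹' S = (inclR n) ⁻¹' (S ∩ Set.range (inclR n)) := by
      ext z; simp [Set.mem_preimage]
    rw [heq]
    exact ((h n).preimage ((inclR_injective n).injOn)).isClosed
  exact this

/-- A compact subset of `ℝ^∞` is contained in some finite stage. -/
lemma compact_subset_range {K : Set Rinf} (hK : IsCompact K) :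
    ∃ N, K ⊆ Set.range (inclR N) := by
  by_contra h
  push_neg at h
  choose x hxK hxR using fun N => Set.not_subset.1 (h N)
  set S := Set.range x with hS
  have hsub : ∀ T ⊆ S, IsClosed T := by
    intro T hT
    refine isClosed_of_finite_inter fun k => ?_
    refine ((Set.finite_Iio k).image x).subset ?_
    rintro y ⟨hyT, hyR⟩
    obtain ⟨n, rfl⟩ := hT hyT
    refine ⟨n, ?_, rfl⟩
    by_contra hn
    exact hxR n (range_inclR_mono (Nat.not_lt.1 hn) hyR)
  have hSK : S ⊆ K := by rintro y ⟨n, rfl⟩; exact hxK n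
  have hSc : IsCompact S := hK.of_isClosed_subset (hsub S (le_refl _)) hSK
  have hinf : S.Infinite := by
    intro hfin
    classical
    choose nz hnz using fun s : S => exists_mem_range_inclR s.1
    haveI : Fintype S := hfin.fintype
    set N := Finset.univ.sup nz with hN
    have : x N ∈ Set.range (inclR N) := by
      have hxN : x N ∈ S := ⟨N, rfl⟩
      have := hnz ⟨x N, hxN⟩
      exact range_inclR_mono (Finset.le_sup (Finset.mem_univ _)) this
    exact hxR N this
  -- S is compact with every subset closed, hence finite: contradiction
  have hfin : S.Finite := by
    have hcov : S ⊆ ⋃ s ∈ S, ((S \ {s})ᶜ : Set Rinf) := by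
      intro s hs
      exact Set.mem_biUnion hs (by simp)
    obtain ⟨t, ht⟩ := hSc.elim_finite_subcover_image
      (fun s _ => (hsub (S \ {s}) Set.diff_subset).isOpen_compl) hcov
    refine ht.2.1.subset fun s hs => ?_
    obtain ⟨i, hit, hsi⟩ := Set.mem_iUnion₂.1 (ht.2.2 hs)
    have : s = i := by
      by_contra hne
      exact hsi ⟨hs, hne⟩
    exact this ▸ hit
  exact hinf hfin


set_option maxHeartbeats 1000000 in
/-- Orthogonal splitting inside a finite-dimensional subspace. -/
lemma split_orth (U T : Submodule ℝ Rinf) (hUT : U ≤ T) [FiniteDimensional ℝ T]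
    {x : Rinf} (hx : x ∈ T) :
    ∃ p ∈ U, ∃ q ∈ Bf.orthogonal U ⊓ T, x = p + q := by
  set B' := Bf.restrict T with hB'
  set U' := U.comap T.subtype with hU'
  have hrefl : B'.IsRefl := fun a b h => by
    have := Bf_isRefl a.1 b.1 (by simpa [hB'] using h)
    simpa [hB'] using this
  have hnd : (B'.restrict U').Nondegenerate := by
    refine ⟨?_, ?_⟩ <;>
    · intro v hv
      have := hv v
      have h0 : rinner (v.1.1 : Rinf) v.1.1 = 0 := by
        simpa [hB'] using this
      have hz : (v.1.1 : Rinf) = 0 := rinner_self_eq_zero h0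
      exact Subtype.ext (Subtype.ext hz)
  have hcompl : IsCompl U' (B'.orthogonal U') :=
    @LinearMap.BilinForm.isCompl_orthogonal_of_restrict_nondegenerate ↥T ℝ _ _ _ _ B' U' hrefl hnd
  have htop : U' ⊔ B'.orthogonal U' = ⊤ := codisjoint_iff.1 hcompl.codisjoint
  have hxmem : (⟨x, hx⟩ : T) ∈ U' ⊔ B'.orthogonal U' := htop ▸ Submodule.mem_top
  obtain ⟨p', hp', q', hq', hpq⟩ := Submodule.mem_sup.1 hxmem
  refine ⟨p'.1, hp', q'.1, ⟨?_, q'.2⟩, ?_⟩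
  · intro u hu
    have hmem : (⟨u, hUT hu⟩ : T) ∈ U' := hu
    have := hq' ⟨u, hUT hu⟩ hmem
    simpa [hB', LinearMap.BilinForm.IsOrtho] using this
  · have := congrArg Subtype.val hpq
    simpa using this.symm

/-- Let `G` be a compact topological group acting continuously on `ℝ^∞`
by linear isometries. Then `ℝ^∞` is the orthogonal direct sum of countably many
finite-dimensional `G`-invariant subspaces: there exist pairwise orthogonal
finite-dimensional `G`-invariant subspaces `W 0, W 1, …` such that
`ℝ^n ⊆ W 0 ⊕ ⋯ ⊕ W (n-1)` for all `n`, and the `W i` together span `ℝ^∞`. -/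
theorem orthogonal_decomposition (G : Type) [Group G] [TopologicalSpace G]
    [IsTopologicalGroup G] [CompactSpace G]
    (σ : G → Rinf → Rinf)
    (hcont : Continuous fun p : G × Rinf => σ p.1 p.2)
    (hone : ∀ x, σ 1 x = x)
    (hmul : ∀ g h x, σ (g * h) x = σ g (σ h x))
    (hadd : ∀ g a b, σ g (a + b) = σ g a + σ g b)
    (hsmul : ∀ g (c : ℝ) a, σ g (c • a) = c • σ g a)
    (hinner : ∀ g a b, rinner (σ g a) (σ g b) = rinner a b) :
    ∃ W : ℕ → Submodule ℝ Rinf,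
      (∀ i, FiniteDimensional ℝ (W i)) ∧
      (∀ i, ∀ g, ∀ x ∈ W i, σ g x ∈ W i) ∧
      (∀ i j, i ≠ j → ∀ x ∈ W i, ∀ y ∈ W j, rinner x y = 0) ∧
      (∀ n, ∀ x ∈ LinearMap.range (inclR n), x ∈ ⨆ i ∈ Finset.range n, W i) ∧
      (⨆ i, W i) = ⊤ := by
  classical
  -- σ g as a linear map
  set L : G → Rinf →ₗ[ℝ] Rinf := fun g =>
    { toFun := σ g, map_add' := hadd g, map_smul' := hsmul g } with hLdef
  -- span of the orbit
  set SO : Rinf → Submodule ℝ Rinf :=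
    fun x => Submodule.span ℝ (Set.range fun g => σ g x) with hSO
  have hSOfin : ∀ x, FiniteDimensional ℝ (SO x) := by
    intro x
    have hc : IsCompact (Set.range fun g : G => σ g x) := by
      have : Continuous fun g : G => σ g x :=
        hcont.comp (continuous_id.prodMk continuous_const)
      exact isCompact_range this
    obtain ⟨N, hN⟩ := compact_subset_range hc
    have hle : SO x ≤ LinearMap.range (inclR N) := by
      rw [hSO]
      refine Submodule.span_le.2 ?_
      intro y hy
      exact LinearMap.mem_range.2 (hN hy)
    exact Submodule.finiteDimensional_of_le hle
  have hSOinv : ∀ g x, ∀ v ∈ SO x, σ g v ∈ SO x := by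
    intro g x v hv
    have hmap : Submodule.map (L g) (SO x) ≤ SO x := by
      rw [hSO, Submodule.map_span]
      refine Submodule.span_le.2 ?_
      rintro y ⟨z, ⟨h', rfl⟩, rfl⟩
      refine Submodule.subset_span ⟨g * h', ?_⟩
      show σ (g * h') x = σ g (σ h' x)
      exact hmul g h' x
    exact hmap ⟨v, hv, rfl⟩
  have hSOself : ∀ x, x ∈ SO x := fun x =>
    Submodule.subset_span ⟨1, hone x⟩
  -- the increasing family V
  set V : ℕ → Submodule ℝ Rinf :=
    fun k => ⨆ i ∈ Finset.range k, SO (Finsupp.single i 1) with hV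
  have hVfin : ∀ k, FiniteDimensional ℝ (V k) := by
    intro k
    have h : V k = (Finset.range k).sup fun i => SO (Finsupp.single i 1) := by
      rw [hV, Finset.sup_eq_iSup]
    rw [h]
    haveI := hSOfin
    exact Submodule.finiteDimensional_finset_sup _ _
  have hVmono : Monotone V := by
    intro a b hab
    exact biSup_mono fun i hi => Finset.mem_range.2 ((Finset.mem_range.1 hi).trans_le hab)
  have hVinv : ∀ k g, ∀ v ∈ V k, σ g v ∈ V k := by
    intro k g v hv
    have hmap : Submodule.map (L g) (V k) ≤ V k := by
      rw [hV, Submodule.map_iSup]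
      refine iSup_mono fun i => ?_
      rw [Submodule.map_iSup]
      refine iSup_mono fun hi => ?_
      rintro y ⟨z, hz, rfl⟩
      exact hSOinv g _ z hz
    exact hmap ⟨v, hv, rfl⟩
  have hRV : ∀ k, ∀ x ∈ Set.range (inclR k), x ∈ V k := by
    intro k x hx
    have hsupp : ∀ m ∈ x.support, m < k := by
      intro m hm
      by_contra h
      exact Finsupp.mem_support_iff.1 hm (mem_range_inclR_iff.1 hx m (Nat.not_lt.1 h))
    have hrepr := Finsupp.sum_single x
    rw [← hrepr]
    refine Submodule.finsuppSum_mem ℝ (V k) x Finsupp.single fun i hi => ?_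
    have h1 : Finsupp.single i (x i) = (x i) • Finsupp.single i (1 : ℝ) := by
      rw [Finsupp.smul_single, smul_eq_mul, mul_one]
    rw [h1]
    refine Submodule.smul_mem _ _ ?_
    have hik : i < k := hsupp i (Finsupp.mem_support_iff.2 hi)
    exact Submodule.mem_iSup_of_mem i
      (Submodule.mem_iSup_of_mem (Finset.mem_range.2 hik) (hSOself _))
  -- the orthogonal pieces
  set Wf : ℕ → Submodule ℝ Rinf := fun k => Bf.orthogonal (V k) ⊓ V (k + 1) with hW
  have key : ∀ k, V k ≤ ⨆ i ∈ Finset.range k, Wf i := by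
    intro k
    induction k with
    | zero => simp [hV]
    | succ k ih =>
      intro x hx
      haveI := hVfin (k + 1)
      obtain ⟨p, hp, q, hq, rfl⟩ := split_orth (V k) (V (k + 1)) (hVmono k.le_succ) hx
      refine Submodule.add_mem _ ?_ ?_
      · refine (le_trans ih (biSup_mono fun i hi => ?_)) hp
        exact Finset.mem_range.2 ((Finset.mem_range.1 hi).trans k.lt_succ_self)
      · exact Submodule.mem_iSup_of_mem k
          (Submodule.mem_iSup_of_mem (Finset.self_mem_range_succ k) hq)
  refine ⟨Wf, ?_, ?_, ?_, ?_, ?_⟩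
  · intro i
    haveI := hVfin (i + 1)
    exact Submodule.finiteDimensional_of_le inf_le_right
  · rintro i g x ⟨hxo, hxV⟩
    refine ⟨?_, hVinv _ g x hxV⟩
    intro v hv
    have hv' : σ g (σ g⁻¹ v) = v := by
      rw [← hmul, mul_inv_cancel, hone]
    show Bf v (σ g x) = 0
    calc Bf v (σ g x) = rinner (σ g (σ g⁻¹ v)) (σ g x) := by rw [Bf_apply, hv']
      _ = rinner (σ g⁻¹ v) x := hinner g _ _
      _ = 0 := hxo _ (hVinv i g⁻¹ v hv)
  · intro i j hij x hx y hy
    rcases lt_or_gt_of_ne hij with h | h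
    · have hxV : x ∈ V j := hVmono h hx.2
      exact hy.1 x hxV
    · have hyV : y ∈ V i := hVmono h hy.2
      rw [rinner_comm]
      exact hx.1 y hyV
  · intro n x hx
    exact key n (hRV n x (LinearMap.mem_range.1 hx))
  · rw [eq_top_iff]
    intro x _
    obtain ⟨n, hn⟩ := exists_mem_range_inclR x
    have hle : (⨆ i ∈ Finset.range n, Wf i) ≤ ⨆ i, Wf i :=
      iSup₂_le fun i _ => le_iSup Wf i
    exact hle (key n (hRV n x hn))

end
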